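/- arXiv:1412.4099 — 3 statements merged into one kernel-verified Lean document; each statement's English description precedes it below -/
import Mathlib

section
/- Let σ : ℝ → ℝ² be a smooth curve with σ(0) = 0, σ'(0) = 0 and σ''(0) ≠ 0. Then there exist an orthonormal basis {x, y} of ℝ² and a smooth reparametrization v of a neighborhood of 0 (with v(0)=0, v'(0)≠0) and a real number α such that the 3-jet of σ in the new parameter equals v ↦ (v²/2)·x + (α v³/6)·y. -/
open scoped ContDiff

noncomputable section

theorem cusp_curve_normal_form_3jet
    (σ : ℝ → Fin 2 → ℝ) (hσ : ContDiff ℝ (⊤ : ℕ∞) σ)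
    (h0 : σ 0 = 0) (h1 : deriv σ 0 = 0) (h2 : iteratedDeriv 2 σ 0 ≠ 0) :
    ∃ (x y : Fin 2 → ℝ) (φ : ℝ → ℝ) (α : ℝ),
      x 0 ^ 2 + x 1 ^ 2 = 1 ∧
      y 0 ^ 2 + y 1 ^ 2 = 1 ∧
      x 0 * y 0 + x 1 * y 1 = 0 ∧
      ContDiff ℝ (⊤ : ℕ∞) φ ∧ φ 0 = 0 ∧ deriv φ 0 ≠ 0 ∧
      (σ ∘ φ) 0 = 0 ∧ deriv (σ ∘ φ) 0 = 0 ∧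
      iteratedDeriv 2 (σ ∘ φ) 0 = x ∧
      iteratedDeriv 3 (σ ∘ φ) 0 = α • y := by
  have hsig : ContDiff ℝ ∞ σ := hσ.of_le (by simp)
  set g1 := deriv σ with hg1def
  set g2 := deriv g1 with hg2def
  have hσd : Differentiable ℝ σ := hsig.differentiable (by simp)
  have hg1c : ContDiff ℝ ∞ g1 := (contDiff_infty_iff_deriv.mp hsig).2
  have hg1d : Differentiable ℝ g1 := hg1c.differentiable (by simp)
  have hg2c : ContDiff ℝ ∞ g2 := (contDiff_infty_iff_deriv.mp hg1c).2
  have hg2d : Differentiable ℝ g2 := hg2c.differentiable (by simp)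
  have hwid : iteratedDeriv 2 σ 0 = g2 0 := by
    rw [iteratedDeriv_succ, iteratedDeriv_one]
  set w := g2 0 with hwdef
  set u := deriv g2 0 with hudef
  have hwne : w ≠ 0 := hwid ▸ h2
  have hw01 : w 0 ≠ 0 ∨ w 1 ≠ 0 := by
    by_contra h
    push_neg at h
    exact hwne (funext fun i => by fin_cases i <;> simp [h.1, h.2])
  have hS : 0 < w 0 ^ 2 + w 1 ^ 2 := by
    rcases hw01 with h | h <;> positivity
  set S := w 0 ^ 2 + w 1 ^ 2 with hSdef
  set n := Real.sqrt S with hndef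
  have hn : 0 < n := Real.sqrt_pos.mpr hS
  have hn2 : n ^ 2 = S := Real.sq_sqrt hS.le
  set c := (Real.sqrt n)⁻¹ with hcdef
  have hsn : 0 < Real.sqrt n := Real.sqrt_pos.mpr hn
  have hc : c ≠ 0 := inv_ne_zero hsn.ne'
  have hc2 : c ^ 2 = n⁻¹ := by
    rw [hcdef, inv_pow, Real.sq_sqrt hn.le]
  set P := u 0 * w 0 + u 1 * w 1 with hPdef
  set Q := u 1 * w 0 - u 0 * w 1 with hQdef
  set a := -(c ^ 2 * P) / (6 * S) with hadef
  set φ : ℝ → ℝ := fun t => c * t + a * t ^ 2 with hφdef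
  have hφ0 : φ 0 = 0 := by simp [hφdef]
  have hφ' : ∀ t, HasDerivAt φ (c + 2 * a * t) t := by
    intro t
    have h := ((hasDerivAt_id t).const_mul c).add ((hasDerivAt_pow 2 t).const_mul a)
    refine h.congr_deriv ?_
    norm_num
    ring
  -- first derivative of σ ∘ φ
  set F1 : ℝ → Fin 2 → ℝ := fun t => (c + 2 * a * t) • g1 (φ t) with hF1def
  have hD1 : deriv (σ ∘ φ) = F1 := by
    funext t
    exact ((hσd (φ t)).hasDerivAt.scomp t (hφ' t)).deriv
  -- second derivative
  set F2 : ℝ → Fin 2 → ℝ :=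
    fun t => ((c + 2 * a * t) ^ 2) • g2 (φ t) + (2 * a) • g1 (φ t) with hF2def
  have hlin : ∀ t, HasDerivAt (fun s => c + 2 * a * s) (2 * a) t := by
    intro t
    have h := (hasDerivAt_const t c).add ((hasDerivAt_id t).const_mul (2 * a))
    refine h.congr_deriv ?_
    ring
  have hg1φ : ∀ t, HasDerivAt (fun s => g1 (φ s)) ((c + 2 * a * t) • g2 (φ t)) t := by
    intro t
    exact (hg1d (φ t)).hasDerivAt.scomp t (hφ' t)
  have hD2 : deriv F1 = F2 := by
    funext t
    have h := (hlin t).smul (hg1φ t)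
    have h2' : (c + 2 * a * t) • ((c + 2 * a * t) • g2 (φ t)) + (2 * a) • g1 (φ t)
        = F2 t := by
      rw [smul_smul, ← sq]
    rw [← h2']
    exact h.deriv
  -- third derivative at 0
  have hgu : HasDerivAt g2 u (φ 0) := by rw [hφ0]; exact (hg2d 0).hasDerivAt
  have hg2φ : HasDerivAt (fun s => g2 (φ s)) ((c + 2 * a * 0) • u) 0 :=
    hgu.scomp 0 (hφ' 0)
  have hgw : HasDerivAt g1 w (φ 0) := by rw [hφ0]; exact (hg1d 0).hasDerivAt
  have hD3 : HasDerivAt F2 (c ^ 3 • u + (6 * a * c) • w) 0 := by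
    have hterm1 := ((hlin 0).pow 2).smul hg2φ
    have hterm2 := (hgw.scomp 0 (hφ' 0)).const_smul (2 * a)
    have h := hterm1.add hterm2
    simp only [mul_zero, add_zero, pow_one, hφ0, Nat.cast_ofNat] at h
    rw [← hwdef] at h
    refine h.congr_deriv ?_
    norm_num
    module
  -- choose basis vectors and α
  refine ⟨n⁻¹ • w, n⁻¹ • ![-(w 1), w 0], φ, c ^ 3 * Q * n / S, ?_, ?_, ?_, ?_, hφ0,
    ?_, ?_, ?_, ?_, ?_⟩
  · simp only [Pi.smul_apply, smul_eq_mul]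
    field_simp
    linarith [hn2]
  · simp only [Pi.smul_apply, smul_eq_mul, Matrix.cons_val_zero, Matrix.cons_val_one,
      Matrix.head_cons]
    field_simp
    linarith [hn2]
  · simp only [Pi.smul_apply, smul_eq_mul, Matrix.cons_val_zero, Matrix.cons_val_one,
      Matrix.head_cons]
    ring
  · rw [hφdef]; fun_prop
  · have hd : deriv φ 0 = c := by
      have := (hφ' 0).deriv
      simpa using this
    rw [hd]; exact hc
  · simp [Function.comp, hφ0, h0]
  · rw [hD1, hF1def]
    simp only [hφ0, mul_zero, add_zero]
    rw [show g1 0 = 0 from h1]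
    simp
  · rw [iteratedDeriv_succ, iteratedDeriv_one, hD1, hD2, hF2def]
    simp only [hφ0, mul_zero, add_zero]
    rw [← hwdef, show g1 0 = 0 from h1, hc2]
    simp
  · rw [iteratedDeriv_succ, iteratedDeriv_succ, iteratedDeriv_one, hD1, hD2, hD3.deriv]
    funext i
    fin_cases i <;>
    · simp only [Pi.add_apply, Pi.smul_apply, smul_eq_mul, Fin.zero_eta, Fin.mk_one, Matrix.cons_val_zero,
        Matrix.cons_val_one, Matrix.head_cons]
      rw [hadef, hPdef, hQdef, hSdef]
      have hS' : w 0 ^ 2 + w 1 ^ 2 ≠ 0 := hS.ne'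
      field_simp
      ring
end
end

section
/- Let γ̂ : ℝ → ℝ³ be a unit-speed curve with curvature κ(u) > 0, Frenet frame {t, n, b} and torsion τ. If the vector field u ↦ γ̂'(u) × γ̂'''(u) is constant, then τ ≡ 0 and κ'' ≡ 0. -/
noncomputable section

def cross3 (a b : Fin 3 → ℝ) : Fin 3 → ℝ :=
  ![a 1 * b 2 - a 2 * b 1, a 2 * b 0 - a 0 * b 2, a 0 * b 1 - a 1 * b 0]

def dot3 (a b : Fin 3 → ℝ) : ℝ := a 0 * b 0 + a 1 * b 1 + a 2 * b 2

theorem constant_cross_deriv_implies_planar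
    (γ t n b : ℝ → Fin 3 → ℝ) (κ τ : ℝ → ℝ)
    (hγ : ContDiff ℝ (⊤ : ℕ∞) γ) (ht : ContDiff ℝ (⊤ : ℕ∞) t) (hn : ContDiff ℝ (⊤ : ℕ∞) n)
    (hb : ContDiff ℝ (⊤ : ℕ∞) b) (hκ : ContDiff ℝ (⊤ : ℕ∞) κ) (hτ : ContDiff ℝ (⊤ : ℕ∞) τ)
    (hunit : ∀ u, deriv γ u = t u)
    (hon : ∀ u, dot3 (t u) (t u) = 1 ∧ dot3 (n u) (n u) = 1 ∧
      dot3 (b u) (b u) = 1 ∧ dot3 (t u) (n u) = 0 ∧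
      dot3 (t u) (b u) = 0 ∧ dot3 (n u) (b u) = 0)
    (hκpos : ∀ u, 0 < κ u)
    (hF1 : ∀ u, deriv t u = κ u • n u)
    (hF2 : ∀ u, deriv n u = (-κ u) • t u + τ u • b u)
    (hF3 : ∀ u, deriv b u = (-τ u) • n u)
    (hconst : ∃ c : Fin 3 → ℝ, ∀ u, cross3 (deriv γ u) (iteratedDeriv 3 γ u) = c) :
    ∀ u, τ u = 0 ∧ iteratedDeriv 2 κ u = 0 := by
  obtain ⟨c, hc⟩ := hconst
  have htd : Differentiable ℝ t := ht.differentiable (by simp)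
  have hnd : Differentiable ℝ n := hn.differentiable (by simp)
  have hbd : Differentiable ℝ b := hb.differentiable (by simp)
  have hκd : Differentiable ℝ κ := hκ.differentiable (by simp)
  have hT : ∀ u i, HasDerivAt (fun v => t v i) (κ u * n u i) u := by
    intro u i
    have h := (htd u).hasDerivAt
    rw [hF1 u] at h
    simpa using hasDerivAt_pi.mp h i
  have hN : ∀ u i, HasDerivAt (fun v => n v i) (-κ u * t u i + τ u * b u i) u := by
    intro u i
    have h := (hnd u).hasDerivAt
    rw [hF2 u] at h
    simpa using hasDerivAt_pi.mp h i
  have hB : ∀ u i, HasDerivAt (fun v => b v i) (-τ u * n u i) u := by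
    intro u i
    have h := (hbd u).hasDerivAt
    rw [hF3 u] at h
    simpa using hasDerivAt_pi.mp h i
  -- third derivative of γ
  have hG : ∀ u, iteratedDeriv 3 γ u
      = κ u • ((-κ u) • t u + τ u • b u) + deriv κ u • n u := by
    have h3a : iteratedDeriv 3 γ = deriv (iteratedDeriv 2 γ) := iteratedDeriv_succ
    have h2a : iteratedDeriv 2 γ = deriv (iteratedDeriv 1 γ) := iteratedDeriv_succ
    have h3 : iteratedDeriv 3 γ = deriv (fun v => κ v • n v) := by
      rw [h3a, h2a, iteratedDeriv_one, funext hunit, funext hF1]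
    intro u
    have hs : HasDerivAt (fun v => κ v • n v) (κ u • deriv n u + deriv κ u • n u) u :=
      (hκd u).hasDerivAt.smul (hnd u).hasDerivAt
    rw [h3, hs.deriv, hF2 u]
  -- c ⟂ t
  have hct : ∀ u, dot3 c (t u) = 0 := by
    intro u
    rw [← hc u, hunit u]
    simp only [dot3, cross3]
    simp
    ring
  -- c ⟂ n
  have hcn : ∀ u, dot3 c (n u) = 0 := by
    intro u
    have h1 : HasDerivAt (fun v => dot3 c (t v)) (κ u * dot3 c (n u)) u := by
      have h := (((hT u 0).const_mul (c 0)).add ((hT u 1).const_mul (c 1))).add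
        ((hT u 2).const_mul (c 2))
      have h2 : (fun v => (c 0 * t v 0 + c 1 * t v 1) + c 2 * t v 2)
          = fun v => dot3 c (t v) := by
        funext v; simp [dot3]
      have h : HasDerivAt (fun v => (c 0 * t v 0 + c 1 * t v 1) + c 2 * t v 2) _ u := h
      rw [h2] at h
      convert h using 1
      simp [dot3]; ring
    have h0 : HasDerivAt (fun v => dot3 c (t v)) 0 u := by
      have he : (fun v => dot3 c (t v)) = fun _ => (0:ℝ) := funext hct
      rw [he]; exact hasDerivAt_const u 0
    have := h1.unique h0
    have hκne := (hκpos u).ne'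
    exact (mul_eq_zero.mp this).resolve_left hκne
  -- D² = 1
  have hDsq : ∀ u, dot3 (cross3 (t u) (n u)) (b u) ^ 2 = 1 := by
    intro u
    obtain ⟨h1, h2, h3, h4, h5, h6⟩ := hon u
    have key : dot3 (cross3 (t u) (n u)) (b u) ^ 2 =
        dot3 (t u) (t u) * (dot3 (n u) (n u) * dot3 (b u) (b u) - dot3 (n u) (b u) ^ 2)
        - dot3 (t u) (n u) * (dot3 (t u) (n u) * dot3 (b u) (b u)
            - dot3 (n u) (b u) * dot3 (t u) (b u))
        + dot3 (t u) (b u) * (dot3 (t u) (n u) * dot3 (n u) (b u)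
            - dot3 (n u) (n u) * dot3 (t u) (b u)) := by
      simp only [dot3, cross3]
      simp
      ring
    rw [h1, h2, h3, h4, h5, h6] at key
    linarith [key]
  have hDne : ∀ u, dot3 (cross3 (t u) (n u)) (b u) ≠ 0 := by
    intro u h0
    have := hDsq u
    rw [h0] at this
    norm_num at this
  -- torsion vanishes
  have hτ0 : ∀ u, τ u = 0 := by
    intro u
    have hx : dot3 c (n u) = -(κ u * τ u * dot3 (cross3 (t u) (n u)) (b u)) := by
      rw [← hc u, hunit u, hG u]
      simp only [dot3, cross3]
      simp
      ring
    have h := hcn u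
    rw [hx] at h
    have h' : κ u * τ u * dot3 (cross3 (t u) (n u)) (b u) = 0 := by linarith
    rcases mul_eq_zero.mp h' with h'' | h''
    · rcases mul_eq_zero.mp h'' with h3 | h3
      · exact absurd h3 (hκpos u).ne'
      · exact h3
    · exact absurd h'' (hDne u)
  -- D' = 0
  have hD' : ∀ u, HasDerivAt (fun v => dot3 (cross3 (t v) (n v)) (b v)) 0 u := by
    intro u
    have e1 := (((hT u 1).mul (hN u 2)).sub ((hT u 2).mul (hN u 1))).mul (hB u 0)
    have e2 := (((hT u 2).mul (hN u 0)).sub ((hT u 0).mul (hN u 2))).mul (hB u 1)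
    have e3 := (((hT u 0).mul (hN u 1)).sub ((hT u 1).mul (hN u 0))).mul (hB u 2)
    have h := (e1.add e2).add e3
    have h2 : (fun v => ((t v 1 * n v 2 - t v 2 * n v 1) * b v 0
        + (t v 2 * n v 0 - t v 0 * n v 2) * b v 1)
        + (t v 0 * n v 1 - t v 1 * n v 0) * b v 2)
        = fun v => dot3 (cross3 (t v) (n v)) (b v) := by
      funext v
      simp [dot3, cross3]
    have h : HasDerivAt (fun v => ((t v 1 * n v 2 - t v 2 * n v 1) * b v 0
        + (t v 2 * n v 0 - t v 0 * n v 2) * b v 1)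
        + (t v 0 * n v 1 - t v 1 * n v 0) * b v 2) _ u := h
    rw [h2] at h
    convert h using 1
    simp only [Pi.mul_apply, Pi.sub_apply]
    ring
  -- the identity c·b = κ' D
  have hid : ∀ u, dot3 c (b u) = deriv κ u * dot3 (cross3 (t u) (n u)) (b u) := by
    intro u
    rw [← hc u, hunit u, hG u]
    simp only [dot3, cross3]
    simp
    ring
  -- κ'' value
  have hκ2 : ∀ u, HasDerivAt (deriv κ) (iteratedDeriv 2 κ u) u := by
    intro u
    have hd : Differentiable ℝ (deriv κ) := by
      have hκ' : ContDiff ℝ (⊤ : ℕ∞) κ := hκ.of_le (by simp)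
      exact ((contDiff_infty_iff_deriv.mp hκ').2).differentiable (by simp)
    have he : iteratedDeriv 2 κ = deriv (deriv κ) := by
      have h2a : iteratedDeriv 2 κ = deriv (iteratedDeriv 1 κ) := iteratedDeriv_succ
      rw [h2a, iteratedDeriv_one]
    rw [he]
    exact (hd u).hasDerivAt
  intro u
  refine ⟨hτ0 u, ?_⟩
  have hL : HasDerivAt (fun v => dot3 c (b v)) 0 u := by
    have h := (((hB u 0).const_mul (c 0)).add ((hB u 1).const_mul (c 1))).add
      ((hB u 2).const_mul (c 2))
    have h2 : (fun v => (c 0 * b v 0 + c 1 * b v 1) + c 2 * b v 2)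
        = fun v => dot3 c (b v) := by
      funext v; simp [dot3]
    have h : HasDerivAt (fun v => (c 0 * b v 0 + c 1 * b v 1) + c 2 * b v 2) _ u := h
    rw [h2] at h
    convert h using 1
    rw [hτ0 u]
    ring
  have hR : HasDerivAt (fun v => deriv κ v * dot3 (cross3 (t v) (n v)) (b v))
      (iteratedDeriv 2 κ u * dot3 (cross3 (t u) (n u)) (b u)) u := by
    have h := (hκ2 u).mul (hD' u)
    rw [mul_zero, add_zero] at h
    exact h
  have hfun : (fun v => dot3 c (b v))
      = fun v => deriv κ v * dot3 (cross3 (t v) (n v)) (b v) := funext fun v => hid v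
  rw [hfun] at hL
  have hz := hR.unique hL
  exact (mul_eq_zero.mp hz).resolve_right (hDne u)
end
end

section
/- Under a change of adapted vector fields ξ̃ = aξ + bη, η̃ = cξ + dη with b = c = 0 and ηf = 0 at q and a,d > 0 at q, the quantity det(ξf, ηηf, ξξf) / (|ξf|² |ξf × ηηf|) is invariant: det(ξ̃f, η̃η̃f, ξ̃ξ̃f)/(|ξ̃f|²|ξ̃f × η̃η̃f|) = sgn(a) · det(ξf, ηηf, ξξf)/(|ξf|²|ξf × ηηf|) at q, assuming ξf × ηηf ≠ 0 at q. -/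
noncomputable section

def norm3 (a : Fin 3 → ℝ) : ℝ := Real.sqrt (a 0 ^ 2 + a 1 ^ 2 + a 2 ^ 2)

def det3 (a b c : Fin 3 → ℝ) : ℝ := Matrix.det (Matrix.of ![a, b, c])

/-- Derivative of a vector-valued map along a vector field `X` on `ℝ²`. -/
def VD (X : ℝ × ℝ → ℝ × ℝ) (g : ℝ × ℝ → Fin 3 → ℝ) : ℝ × ℝ → Fin 3 → ℝ :=
  fun p => fderiv ℝ g p (X p)

/-- Derivative of a scalar function along a vector field `X` on `ℝ²`. -/
def VDs (X : ℝ × ℝ → ℝ × ℝ) (a : ℝ × ℝ → ℝ) : ℝ × ℝ → ℝ :=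
  fun p => fderiv ℝ a p (X p)

theorem norm3_pos {x : Fin 3 → ℝ} (hx : x ≠ 0) : 0 < norm3 x := by
  have h : x 0 ^ 2 + x 1 ^ 2 + x 2 ^ 2 ≠ 0 := by
    intro h
    have h0 : x 0 = 0 := by nlinarith [sq_nonneg (x 0), sq_nonneg (x 1), sq_nonneg (x 2)]
    have h1 : x 1 = 0 := by nlinarith [sq_nonneg (x 0), sq_nonneg (x 1), sq_nonneg (x 2)]
    have h2 : x 2 = 0 := by nlinarith [sq_nonneg (x 0), sq_nonneg (x 1), sq_nonneg (x 2)]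
    apply hx; funext i
    fin_cases i <;> simp_all
  exact Real.sqrt_pos.mpr (lt_of_le_of_ne (by positivity) (Ne.symm h))

theorem norm3_smul (t : ℝ) (ht : 0 ≤ t) (x : Fin 3 → ℝ) :
    norm3 (t • x) = t * norm3 x := by
  simp only [norm3, Pi.smul_apply, smul_eq_mul]
  rw [show (t * x 0) ^ 2 + (t * x 1) ^ 2 + (t * x 2) ^ 2
      = t ^ 2 * (x 0 ^ 2 + x 1 ^ 2 + x 2 ^ 2) by ring,
    Real.sqrt_mul (by positivity), Real.sqrt_sq ht]

theorem key_alg (u v w : Fin 3 → ℝ) (A D lam mu : ℝ) (hA : 0 < A) (hD : 0 < D)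
    (hcr : cross3 u v ≠ 0) :
    det3 (A • u) (D ^ 2 • v + mu • u) (A ^ 2 • w + lam • u)
        / ((norm3 (A • u)) ^ 2 * norm3 (cross3 (A • u) (D ^ 2 • v + mu • u)))
      = det3 u v w / ((norm3 u) ^ 2 * norm3 (cross3 u v)) := by
  have hu : u ≠ 0 := by
    intro h; apply hcr
    subst h; funext i; fin_cases i <;> simp [cross3]
  have hcross : cross3 (A • u) (D ^ 2 • v + mu • u) = (A * D ^ 2) • cross3 u v := by
    funext i; fin_cases i <;>
      simp [cross3, Pi.smul_apply, Pi.add_apply, smul_eq_mul] <;> ring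
  have hdet : det3 (A • u) (D ^ 2 • v + mu • u) (A ^ 2 • w + lam • u)
      = A ^ 3 * D ^ 2 * det3 u v w := by
    simp [det3, Matrix.det_fin_three, Pi.smul_apply, Pi.add_apply, smul_eq_mul]
    ring
  have hnu : 0 < norm3 u := norm3_pos hu
  have hnc : 0 < norm3 (cross3 u v) := norm3_pos hcr
  rw [hcross, hdet, norm3_smul A hA.le, norm3_smul (A * D ^ 2) (by positivity)]
  field_simp

theorem VD_second (f : ℝ × ℝ → Fin 3 → ℝ) (hf : ContDiff ℝ (⊤ : ℕ∞) f)
    (X : ℝ × ℝ → ℝ × ℝ) (hX : ContDiff ℝ (⊤ : ℕ∞) X) (q : ℝ × ℝ) :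
    VD X (VD X f) q
      = fderiv ℝ (fderiv ℝ f) q (X q) (X q)
        + fderiv ℝ f q (fderiv ℝ X q (X q)) := by
  have hdf : DifferentiableAt ℝ (fderiv ℝ f) q :=
    ((hf.fderiv_right (m := (⊤ : ℕ∞)) (by simp)).differentiable (by simp)) q
  have hdX : DifferentiableAt ℝ X q := hX.differentiable (by simp) q
  show fderiv ℝ (fun p => fderiv ℝ f p (X p)) q (X q) = _
  rw [fderiv_clm_apply hdf hdX]
  simp [add_comm]

theorem normal_curvature_formula_invariance
    (f : ℝ × ℝ → Fin 3 → ℝ) (hf : ContDiff ℝ (⊤ : ℕ∞) f)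
    (ξ η : ℝ × ℝ → ℝ × ℝ) (hξ : ContDiff ℝ (⊤ : ℕ∞) ξ) (hη : ContDiff ℝ (⊤ : ℕ∞) η)
    (a b c d : ℝ × ℝ → ℝ)
    (ha : ContDiff ℝ (⊤ : ℕ∞) a) (hb : ContDiff ℝ (⊤ : ℕ∞) b)
    (hc : ContDiff ℝ (⊤ : ℕ∞) c) (hd : ContDiff ℝ (⊤ : ℕ∞) d)
    (ξt ηt : ℝ × ℝ → ℝ × ℝ)
    (hξt : ξt = fun p => a p • ξ p + b p • η p)
    (hηt : ηt = fun p => c p • ξ p + d p • η p)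
    (q : ℝ × ℝ) (hbq : b q = 0) (hcq : c q = 0)
    (hηf : VD η f q = 0)
    (haq : 0 < a q) (hdq : 0 < d q)
    (hcr : cross3 (VD ξ f q) (VD η (VD η f) q) ≠ 0) :
    det3 (VD ξt f q) (VD ηt (VD ηt f) q) (VD ξt (VD ξt f) q)
        / ((norm3 (VD ξt f q)) ^ 2
            * norm3 (cross3 (VD ξt f q) (VD ηt (VD ηt f) q)))
      = Real.sign (a q)
          * (det3 (VD ξ f q) (VD η (VD η f) q) (VD ξ (VD ξ f) q)
            / ((norm3 (VD ξ f q)) ^ 2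
                * norm3 (cross3 (VD ξ f q) (VD η (VD η f) q)))) := by
  have hξtC : ContDiff ℝ (⊤ : ℕ∞) ξt := by rw [hξt]; exact (ha.smul hξ).add (hb.smul hη)
  have hηtC : ContDiff ℝ (⊤ : ℕ∞) ηt := by rw [hηt]; exact (hc.smul hξ).add (hd.smul hη)
  have hηf0 : fderiv ℝ f q (η q) = 0 := hηf
  have hξtq : ξt q = a q • ξ q := by rw [hξt]; simp [hbq]
  have hηtq : ηt q = d q • η q := by rw [hηt]; simp [hcq]
  have hda := ha.differentiable (by simp) q
  have hdb := hb.differentiable (by simp) q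
  have hdc := hc.differentiable (by simp) q
  have hdd := hd.differentiable (by simp) q
  have hdξ := hξ.differentiable (by simp) q
  have hdη := hη.differentiable (by simp) q
  have hfd_ξt : fderiv ℝ ξt q
      = (a q • fderiv ℝ ξ q + (fderiv ℝ a q).smulRight (ξ q))
        + (b q • fderiv ℝ η q + (fderiv ℝ b q).smulRight (η q)) := by
    rw [hξt, fderiv_fun_add (f := fun p => a p • ξ p) (g := fun p => b p • η p) (hda.smul hdξ) (hdb.smul hdη),
      fderiv_fun_smul hda hdξ, fderiv_fun_smul hdb hdη]
  have hfd_ηt : fderiv ℝ ηt q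
      = (c q • fderiv ℝ ξ q + (fderiv ℝ c q).smulRight (ξ q))
        + (d q • fderiv ℝ η q + (fderiv ℝ d q).smulRight (η q)) := by
    rw [hηt, fderiv_fun_add (f := fun p => c p • ξ p) (g := fun p => d p • η p) (hdc.smul hdξ) (hdd.smul hdη),
      fderiv_fun_smul hdc hdξ, fderiv_fun_smul hdd hdη]
  have e1 : VD ξt f q = a q • VD ξ f q := by
    show fderiv ℝ f q (ξt q) = a q • fderiv ℝ f q (ξ q)
    rw [hξtq, map_smul]
  have e2 : VD ξt (VD ξt f) q
      = (a q) ^ 2 • VD ξ (VD ξ f) q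
        + (a q * fderiv ℝ a q (ξ q)) • VD ξ f q := by
    rw [VD_second f hf ξt hξtC q, VD_second f hf ξ hξ q, hfd_ξt, hξtq, hbq]
    show _ = _ • (fderiv ℝ (fderiv ℝ f) q (ξ q) (ξ q)
        + fderiv ℝ f q (fderiv ℝ ξ q (ξ q))) + _ • fderiv ℝ f q (ξ q)
    simp only [ContinuousLinearMap.add_apply, ContinuousLinearMap.smul_apply,
      ContinuousLinearMap.smulRight_apply, map_smul, map_add, smul_smul,
      zero_smul, smul_zero, add_zero, zero_add, hηf0]
    module
  have e3 : VD ηt (VD ηt f) q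
      = (d q) ^ 2 • VD η (VD η f) q
        + (d q * fderiv ℝ c q (η q)) • VD ξ f q := by
    rw [VD_second f hf ηt hηtC q, VD_second f hf η hη q, hfd_ηt, hηtq, hcq]
    show _ = _ • (fderiv ℝ (fderiv ℝ f) q (η q) (η q)
        + fderiv ℝ f q (fderiv ℝ η q (η q))) + _ • fderiv ℝ f q (ξ q)
    simp only [ContinuousLinearMap.add_apply, ContinuousLinearMap.smul_apply,
      ContinuousLinearMap.smulRight_apply, map_smul, map_add, smul_smul,
      zero_smul, smul_zero, add_zero, zero_add, hηf0]
    module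
  rw [e1, e2, e3, Real.sign_of_pos haq, one_mul]
  exact key_alg (VD ξ f q) (VD η (VD η f) q) (VD ξ (VD ξ f) q)
    (a q) (d q) (a q * fderiv ℝ a q (ξ q)) (d q * fderiv ℝ c q (η q)) haq hdq hcr
end
end
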